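/- For the dihedral group D₈ of order 8, exactly 5 subgroups are not in CD(D₈); i.e., δ_CD(D₈) = 5. -/

import Mathlib

noncomputable def mCD {G : Type*} [Group G] (H : Subgroup G) : ℕ :=
  Nat.card H * Nat.card (Subgroup.centralizer (H : Set G))

noncomputable def mStar (G : Type*) [Group G] : ℕ :=
  sSup (Set.range fun H : Subgroup G => mCD H)

noncomputable def CD (G : Type*) [Group G] : Set (Subgroup G) :=
  {H | mCD H = mStar G}

noncomputable def deltaCD (G : Type*) [Group G] : ℕ :=
  Nat.card {H : Subgroup G // H ∉ CD G}

/-!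
Whenever `|G| ≤ 4 |Z(G)|`, `m* = |G| |Z(G)|`: this is `m(G)`; if `C_G(H) = G` then `H ≤ Z(G)`;
otherwise `H` and `C_G(H)` are both proper, so `m(H) ≤ (|G| / 2)² ≤ |G| |Z(G)|`. For `D₈` this
gives `m* = 16`. It is attained by `D₈`, by the central subgroup `⟨r²⟩`, and by the subgroups of
order 4, which are abelian and hence lie in their own centralizers. The remaining five subgroups,
the trivial one and the four generated by a reflection (whose centralizer has order 4), have
`m = 8`.
-/

open Subgroup

section General

variable {G : Type*} [Group G]

lemma centralizer_zpowers (g : G) : centralizer (zpowers g : Set G) = centralizer {g} := by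
  rw [zpowers_eq_closure, centralizer_closure]

lemma two_mul_card_le_of_ne_top [Finite G] {H : Subgroup G} (h : H ≠ ⊤) :
    2 * Nat.card H ≤ Nat.card G := by
  rw [← card_mul_index H, mul_comm]
  exact Nat.mul_le_mul_left _ (one_lt_index_of_ne_top h)

lemma exists_eq_zpowers_of_card_eq_prime {p : ℕ} [Fact p.Prime] {H : Subgroup G}
    (hH : Nat.card H = p) : ∃ x, H = zpowers x ∧ orderOf x = p := by
  have hp : p.Prime := Fact.out
  have : Finite H := Nat.finite_of_card_ne_zero (hH ▸ hp.ne_zero)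
  have hne : H ≠ ⊥ := fun h ↦ hp.one_lt.ne' (by rw [← hH, h, card_bot])
  obtain ⟨a, ha⟩ := ne_bot_iff_exists_ne_one.1 hne
  have hord : orderOf (a : G) = p := by
    rw [orderOf_coe a]
    refine (hp.eq_one_or_self_of_dvd _ (hH ▸ orderOf_dvd_natCard a)).resolve_left ?_
    rwa [orderOf_eq_one_iff]
  refine ⟨a, (eq_of_le_of_card_ge (zpowers_le.2 a.2) ?_).symm, hord⟩
  rw [Nat.card_zpowers, hord, hH]

lemma natCard_eq_card_filter [Fintype G] (H : Subgroup G)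
    (p : G → Prop) [DecidablePred p] (h : ∀ g, g ∈ H ↔ p g) :
    Nat.card H = (Finset.univ.filter p).card := by
  rw [Nat.card_congr (Equiv.subtypeEquivRight h), Nat.card_eq_fintype_card, Fintype.card_subtype]

lemma mCD_top : mCD (⊤ : Subgroup G) = Nat.card G * Nat.card (center G) := by
  rw [mCD, coe_top, centralizer_univ, card_top]

lemma mCD_eq_of_le_center {H : Subgroup G} (h : H ≤ center G) :
    mCD H = Nat.card H * Nat.card G := by
  rw [mCD, centralizer_eq_top_iff_subset.2 h, card_top]

lemma mCD_bot : mCD (⊥ : Subgroup G) = Nat.card G := by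
  rw [mCD_eq_of_le_center bot_le, card_bot, one_mul]

lemma card_mul_card_center_le_mCD [Finite G] (H : Subgroup G) :
    Nat.card H * Nat.card (center G) ≤ mCD H :=
  Nat.mul_le_mul_left _ (card_le_of_le (center_le_centralizer _))

lemma card_sq_le_mCD [Finite G] (H : Subgroup G) [IsMulCommutative H] :
    Nat.card H ^ 2 ≤ mCD H := by
  rw [sq]
  exact Nat.mul_le_mul_left _ (card_le_of_le (le_centralizer H))

variable [Finite G]

lemma mCD_le_card_mul_card_center (hZ : Nat.card G ≤ 4 * Nat.card (center G))
    (H : Subgroup G) : mCD H ≤ Nat.card G * Nat.card (center G) := by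
  by_cases hH : H = ⊤
  · rw [hH, mCD_top]
  by_cases hC : centralizer (H : Set G) = ⊤
  · have hHZ : H ≤ center G := centralizer_eq_top_iff_subset.1 hC
    rw [mCD_eq_of_le_center hHZ, mul_comm]
    exact Nat.mul_le_mul_left _ (card_le_of_le hHZ)
  have : 4 * mCD H ≤ 4 * (Nat.card G * Nat.card (center G)) :=
    calc 4 * mCD H = (2 * Nat.card H) * (2 * Nat.card (centralizer (H : Set G))) := by
          rw [mCD]; ring
      _ ≤ Nat.card G * Nat.card G :=
          Nat.mul_le_mul (two_mul_card_le_of_ne_top hH) (two_mul_card_le_of_ne_top hC)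
      _ ≤ Nat.card G * (4 * Nat.card (center G)) := Nat.mul_le_mul_left _ hZ
      _ = 4 * (Nat.card G * Nat.card (center G)) := by ring
  omega

lemma mStar_eq_card_mul_card_center (hZ : Nat.card G ≤ 4 * Nat.card (center G)) :
    mStar G = Nat.card G * Nat.card (center G) := by
  have hle : ∀ m ∈ Set.range fun H : Subgroup G => mCD H,
      m ≤ Nat.card G * Nat.card (center G) := by
    rintro _ ⟨H, rfl⟩
    exact mCD_le_card_mul_card_center hZ H
  exact le_antisymm (csSup_le (Set.range_nonempty _) hle) (le_csSup ⟨_, hle⟩ ⟨⊤, mCD_top⟩)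

lemma notMem_CD_iff (hZ : Nat.card G ≤ 4 * Nat.card (center G)) {H : Subgroup G} :
    H ∉ CD G ↔ mCD H < Nat.card G * Nat.card (center G) := by
  rw [CD, Set.mem_ofPred_eq, mStar_eq_card_mul_card_center hZ]
  exact (mCD_le_card_mul_card_center hZ H).lt_iff_ne.symm

end General

namespace DihedralGroup

lemma card_center_four : Nat.card (center (DihedralGroup 4)) = 2 := by
  rw [natCard_eq_card_filter _ _ fun _ ↦ mem_center_iff]
  decide

lemma card_centralizer_sr_four (i : ZMod 4) : Nat.card (centralizer {sr i}) = 4 := by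
  rw [natCard_eq_card_filter _ (fun g ↦ g * sr i = sr i * g)
    fun _ ↦ mem_centralizer_singleton_iff]
  revert i
  decide

lemma r_two_mem_center_four : r 2 ∈ center (DihedralGroup 4) :=
  mem_center_iff.2 (by decide)

lemma eq_r_two_or_sr_of_orderOf_eq_two {x : DihedralGroup 4} (hx : orderOf x = 2) :
    x = r 2 ∨ ∃ i, x = sr i := by
  rw [orderOf_eq_prime_iff] at hx
  revert x
  decide

lemma sr_ne_one {n : ℕ} (i : ZMod n) : sr i ≠ 1 := by
  rintro ⟨⟩

lemma mCD_zpowers_sr_four (i : ZMod 4) : mCD (zpowers (sr i : DihedralGroup 4)) = 8 := by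
  rw [mCD, centralizer_zpowers, Nat.card_zpowers, orderOf_sr, card_centralizer_sr_four]

lemma mCD_lt_sixteen_iff (H : Subgroup (DihedralGroup 4)) :
    mCD H < 16 ↔ H = ⊥ ∨ ∃ i, H = zpowers (sr i) := by
  refine ⟨fun h ↦ ?_, ?_⟩
  · have hdvd : Nat.card H ∣ 2 ^ 3 :=
      (card_subgroup_dvd_card H).trans (by rw [nat_card]; norm_num)
    obtain ⟨k, hk, hcard⟩ := (Nat.dvd_prime_pow Nat.prime_two).1 hdvd
    interval_cases k
    · exact .inl (card_eq_one.1 hcard)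
    · obtain ⟨x, rfl, hx⟩ := exists_eq_zpowers_of_card_eq_prime (p := 2) hcard
      rcases eq_r_two_or_sr_of_orderOf_eq_two hx with rfl | ⟨i, rfl⟩
      · rw [mCD_eq_of_le_center (zpowers_le.2 r_two_mem_center_four), hcard, nat_card] at h
        omega
      · exact .inr ⟨i, rfl⟩
    · have := IsPGroup.isMulCommutative_of_card_eq_prime_sq (p := 2) hcard
      have := card_sq_le_mCD H
      rw [hcard] at this
      omega
    · have := card_mul_card_center_le_mCD H
      rw [hcard, card_center_four] at this
      omega
  · rintro (rfl | ⟨i, rfl⟩)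
    · rw [mCD_bot, nat_card]; omega
    · rw [mCD_zpowers_sr_four]; omega

lemma zpowers_sr_injective_four : Function.Injective fun i : ZMod 4 ↦ zpowers (sr i) := by
  intro i j (hij : zpowers (sr i) = zpowers (sr j))
  have hi : sr i ∈ zpowers (sr j) := hij ▸ mem_zpowers (sr i)
  rw [mem_zpowers_iff_mem_range_orderOf, orderOf_sr] at hi
  clear hij
  revert i j
  decide

end DihedralGroup

open DihedralGroup in
theorem stmt18 : deltaCD (DihedralGroup 4) = 5 := by
  have hZ : Nat.card (DihedralGroup 4) ≤ 4 * Nat.card (center (DihedralGroup 4)) := by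
    rw [nat_card, card_center_four]
  have hS : {H | H ∉ CD (DihedralGroup 4)} = insert ⊥ (Set.range fun i ↦ zpowers (sr i)) := by
    ext H
    rw [Set.mem_ofPred_eq, notMem_CD_iff hZ, nat_card, card_center_four]
    simpa only [Set.mem_insert_iff, Set.mem_range, eq_comm] using mCD_lt_sixteen_iff H
  have hbot : ⊥ ∉ Set.range fun i : ZMod 4 ↦ zpowers (sr i) := by
    rintro ⟨i, hi : zpowers (sr i) = ⊥⟩
    exact sr_ne_one i (zpowers_eq_bot.1 hi)
  rw [deltaCD, ← Set.coe_ofPred, Nat.card_coe_set_eq, hS, Set.ncard_insert_of_notMem hbot,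
    Set.ncard_range_of_injective zpowers_sr_injective_four, Nat.card_zmod]
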